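/- Let A be the 5×5 matrix with rows (12, 13, 3, 10, 6), (13, 14, 4, 9, 5), (3, 4, 15, 11, 1), (10, 9, 11, 8, 2), (6, 5, 1, 2, 7). Then there is no real 5×5 matrix B with rank(B) ≤ 2 such that for every column j and all rows i, k, A_{ij} < A_{kj} ⇔ B_{ij} < B_{kj}. That is, the monotone rank (and hence the underlying rank) of A is at least 3, even though its Radon rank is 2. -/

import Mathlib

/-!
Three columns of a matrix of rank at most 2 satisfy a nontrivial linear relation `g`, so `g` is
orthogonal to the difference of any two rows restricted to those columns. In columns 0, 2, 3 the
column orders of `Arad` force four such differences into the four open octants with positive last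
coordinate. No nonzero vector is orthogonal to points of all four: dehomogenised, this says that a
line in the plane meets at most three open quadrants.
-/

/-- The matrix of Proposition "rad_strict". -/
noncomputable def Arad : Matrix (Fin 5) (Fin 5) ℝ :=
  !![12, 13, 3, 10, 6;
     13, 14, 4, 9, 5;
     3, 4, 15, 11, 1;
     10, 9, 11, 8, 2;
     6, 5, 1, 2, 7]

namespace Matrix

theorem exists_mulVec_eq_zero_of_rank_lt {K m n : Type*} [Field K] [Fintype n]
    (A : Matrix m n K) (h : A.rank < Fintype.card n) : ∃ v ≠ 0, A *ᵥ v = 0 := by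
  have hker : LinearMap.ker A.mulVecLin ≠ ⊥ := by
    intro hbot
    have := A.mulVecLin.finrank_range_add_finrank_ker
    rw [hbot, finrank_bot, Module.finrank_fintype_fun_eq_card] at this
    exact h.ne (by simpa [rank] using this)
  obtain ⟨v, hv, hv0⟩ := Submodule.exists_mem_ne_zero_of_ne_bot hker
  exact ⟨v, hv0, hv⟩

end Matrix

lemma eq_zero_of_orthogonal_opposite_octants {l m n a₁ b₁ c₁ a₂ b₂ c₂ : ℝ}
    (hl : 0 ≤ l) (hm : 0 ≤ m)
    (ha₁ : 0 < a₁) (hb₁ : 0 < b₁) (hc₁ : 0 < c₁) (ha₂ : a₂ < 0) (hb₂ : b₂ < 0) (hc₂ : 0 < c₂)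
    (e₁ : l * a₁ + m * b₁ + n * c₁ = 0) (e₂ : l * a₂ + m * b₂ + n * c₂ = 0) :
    l = 0 ∧ m = 0 ∧ n = 0 := by
  have hn₁ : n * c₁ ≤ 0 := by nlinarith
  have hn₂ : 0 ≤ n * c₂ := by nlinarith
  have hn : n = 0 :=
    le_antisymm (nonpos_of_mul_nonpos_left hn₁ hc₁) (nonneg_of_mul_nonneg_left hn₂ hc₂)
  subst hn
  have hla : l * a₁ = 0 := by nlinarith
  have hmb : m * b₁ = 0 := by nlinarith
  exact ⟨(mul_eq_zero.mp hla).resolve_right ha₁.ne', (mul_eq_zero.mp hmb).resolve_right hb₁.ne',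
    rfl⟩

lemma eq_zero_of_orthogonal_four_octants {l m n a₁ b₁ c₁ a₂ b₂ c₂ a₃ b₃ c₃ a₄ b₄ c₄ : ℝ}
    (ha₁ : 0 < a₁) (hb₁ : 0 < b₁) (hc₁ : 0 < c₁)
    (ha₂ : a₂ < 0) (hb₂ : b₂ < 0) (hc₂ : 0 < c₂)
    (ha₃ : a₃ < 0) (hb₃ : 0 < b₃) (hc₃ : 0 < c₃)
    (ha₄ : 0 < a₄) (hb₄ : b₄ < 0) (hc₄ : 0 < c₄)
    (e₁ : l * a₁ + m * b₁ + n * c₁ = 0) (e₂ : l * a₂ + m * b₂ + n * c₂ = 0)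
    (e₃ : l * a₃ + m * b₃ + n * c₃ = 0) (e₄ : l * a₄ + m * b₄ + n * c₄ = 0) :
    l = 0 ∧ m = 0 ∧ n = 0 := by
  -- use the octant whose first two signs agree with those of `(l, m)`, and the opposite one
  rcases le_total 0 l with hl | hl <;> rcases le_total 0 m with hm | hm
  · exact eq_zero_of_orthogonal_opposite_octants hl hm ha₁ hb₁ hc₁ ha₂ hb₂ hc₂ e₁ e₂
  · obtain ⟨h₁, h₂, h₃⟩ := eq_zero_of_orthogonal_opposite_octants (l := l) (m := -m) (n := n)
      hl (neg_nonneg.2 hm) ha₄ (neg_pos.2 hb₄) hc₄ ha₃ (neg_neg_iff_pos.2 hb₃) hc₃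
      (by linear_combination e₄) (by linear_combination e₃)
    exact ⟨h₁, neg_eq_zero.1 h₂, h₃⟩
  · obtain ⟨h₁, h₂, h₃⟩ := eq_zero_of_orthogonal_opposite_octants (l := -l) (m := m) (n := n)
      (neg_nonneg.2 hl) hm (neg_pos.2 ha₃) hb₃ hc₃ (neg_neg_iff_pos.2 ha₄) hb₄ hc₄
      (by linear_combination e₃) (by linear_combination e₄)
    exact ⟨neg_eq_zero.1 h₁, h₂, h₃⟩
  · obtain ⟨h₁, h₂, h₃⟩ := eq_zero_of_orthogonal_opposite_octants (l := -l) (m := -m) (n := n)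
      (neg_nonneg.2 hl) (neg_nonneg.2 hm) (neg_pos.2 ha₂) (neg_pos.2 hb₂) hc₂
      (neg_neg_iff_pos.2 ha₁) (neg_neg_iff_pos.2 hb₁) hc₁
      (by linear_combination e₂) (by linear_combination e₁)
    exact ⟨neg_eq_zero.1 h₁, neg_eq_zero.1 h₂, h₃⟩

/-- No matrix of rank at most 2 has, in every column, the same order of entries as
`Arad`: the monotone rank (hence the underlying rank) of `Arad` is at least 3. -/
theorem stmt19 :
    ¬ ∃ B : Matrix (Fin 5) (Fin 5) ℝ, B.rank ≤ 2 ∧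
      ∀ j i k, Arad i j < Arad k j ↔ B i j < B k j := by
  rintro ⟨B, hrank, hord⟩
  obtain ⟨g, hg, hBg⟩ := (B.submatrix id ![0, 2, 3]).exists_mulVec_eq_zero_of_rank_lt <|
    (B.rank_submatrix_le id _).trans_lt (by rw [Fintype.card_fin]; omega)
  have hrow (i : Fin 5) : g 0 * B i 0 + g 1 * B i 2 + g 2 * B i 3 = 0 := by
    simpa [Matrix.mulVec, dotProduct, Fin.sum_univ_three, mul_comm] using congrFun hBg i
  -- in columns 0, 2, 3 the row differences r₀ - r₄, r₀ - r₁, r₂ - r₃, r₀ - r₃ of `Arad` have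
  -- signs (+,+,+), (-,-,+), (-,+,+), (+,-,+)
  have lt (j i k : Fin 5) (h : Arad i j < Arad k j) : B i j < B k j := (hord j i k).1 h
  obtain ⟨h₀, h₁, h₂⟩ := eq_zero_of_orthogonal_four_octants (l := g 0) (m := g 1) (n := g 2)
    (sub_pos.2 (lt 0 4 0 (by simp [Arad, Nat.ofNat_lt])))
    (sub_pos.2 (lt 2 4 0 (by simp [Arad])))
    (sub_pos.2 (lt 3 4 0 (by simp [Arad, Nat.ofNat_lt])))
    (sub_neg.2 (lt 0 0 1 (by simp [Arad, Nat.ofNat_lt])))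
    (sub_neg.2 (lt 2 0 1 (by simp [Arad, Nat.ofNat_lt])))
    (sub_pos.2 (lt 3 1 0 (by simp [Arad, Nat.ofNat_lt])))
    (sub_neg.2 (lt 0 2 3 (by simp [Arad, Nat.ofNat_lt])))
    (sub_pos.2 (lt 2 3 2 (by simp [Arad, Nat.ofNat_lt])))
    (sub_pos.2 (lt 3 3 2 (by simp [Arad, Nat.ofNat_lt])))
    (sub_pos.2 (lt 0 3 0 (by simp [Arad, Nat.ofNat_lt])))
    (sub_neg.2 (lt 2 0 3 (by simp [Arad, Nat.ofNat_lt])))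
    (sub_pos.2 (lt 3 3 0 (by simp [Arad, Nat.ofNat_lt])))
    (by linear_combination hrow 0 - hrow 4) (by linear_combination hrow 0 - hrow 1)
    (by linear_combination hrow 2 - hrow 3) (by linear_combination hrow 0 - hrow 3)
  exact hg (funext fun c => by fin_cases c <;> assumption)
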